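/- arXiv:2504.16240 — 5 statements merged into one kernel-verified Lean document; each statement's English description precedes it below -/
import Mathlib

section
/- Let X = ∏_{j=1}^m X_j be a finite product of measurable spaces (X_j, 𝒳_j), let 𝒳 = ⊗_j 𝒳_j be the product σ-algebra, and let 𝒳̃ = ⊗_j 𝒳̄_j be the product of the universal completions 𝒳̄_j. If μ and μ' are probability measures on (X, 𝒳̃) that agree on every set in 𝒳, then μ = μ'. -/
open MeasureTheory

/-!
For any finite measure `ρ` on the product, each coordinate marginal of `ρ` is a finite measure
on `(X j, 𝒳_j)`, so a universally measurable side `A ⊆ X j` is null measurable for it and its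
cylinder is null measurable for `ρ` restricted to `𝒳`. Hence every set of `𝒳̃` agrees `ρ`-a.e. with
a set of `𝒳`. Applied to `ρ = μ + μ'`, this moves each set of `𝒳̃` to a set of `𝒳` without changing
its `μ`- or `μ'`-measure.
-/

/-- The completion of a σ-algebra `m` with respect to a measure `μ`:
the σ-algebra of `μ`-null-measurable sets. -/
noncomputable def completionAlg {X : Type*} (m : MeasurableSpace X) (μ : @Measure X m) :
    MeasurableSpace X where
  MeasurableSet' s := @NullMeasurableSet X m s μ
  measurableSet_empty := @MeasurableSet.nullMeasurableSet X m μ ∅ MeasurableSet.empty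
  measurableSet_compl _ hs := @NullMeasurableSet.compl X m μ _ hs
  measurableSet_iUnion _ hs := @NullMeasurableSet.iUnion X m μ _ _ _ hs

/-- The universal completion of a σ-algebra: the intersection of its completions
with respect to all probability measures. -/
noncomputable def univCompletion {X : Type*} (m : MeasurableSpace X) : MeasurableSpace X :=
  ⨅ (μ : @Measure X m) (_ : @IsProbabilityMeasure X m μ), completionAlg m μ

lemma le_univCompletion {X : Type*} (m : MeasurableSpace X) : m ≤ univCompletion m :=
  le_iInf₂ fun _ _ _ hs => hs.nullMeasurableSet

lemma completionAlg_le_of_absolutelyContinuous {X : Type*} {m : MeasurableSpace X}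
    {μ ν : Measure X} (h : μ ≪ ν) : completionAlg m ν ≤ completionAlg m μ :=
  fun _ hs => NullMeasurableSet.mono_ac hs h

/-- A nonzero finite measure is absolutely continuous w.r.t. its normalization, which is a
probability measure. -/
lemma univCompletion_le_completionAlg {X : Type*} {m : MeasurableSpace X} (μ : Measure X)
    [IsFiniteMeasure μ] : univCompletion m ≤ completionAlg m μ := by
  rcases eq_zero_or_neZero μ with rfl | hμ
  · exact fun _ _ => NullMeasurableSet.of_null rfl
  · refine (iInf₂_le _ (isProbabilityMeasureSMul (μ := μ))).trans
      (completionAlg_le_of_absolutelyContinuous (Measure.absolutelyContinuous_smul ?_))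
    exact ENNReal.inv_ne_zero.2 (measure_ne_top μ _)

lemma pi_le_pi_univCompletion {ι : Type*} {X : ι → Type*} (mX : ∀ i, MeasurableSpace (X i)) :
    MeasurableSpace.pi (m := mX) ≤ MeasurableSpace.pi (m := fun i => univCompletion (mX i)) :=
  iSup_mono fun i => MeasurableSpace.comap_mono (le_univCompletion (mX i))

lemma pi_univCompletion_le_completionAlg_trim {ι : Type*} {X : ι → Type*}
    (mX : ∀ i, MeasurableSpace (X i))
    (μ : @Measure (∀ i, X i) (MeasurableSpace.pi (m := fun i => univCompletion (mX i))))
    [IsFiniteMeasure μ] :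
    MeasurableSpace.pi (m := fun i => univCompletion (mX i)) ≤
      completionAlg MeasurableSpace.pi (μ.trim (pi_le_pi_univCompletion mX)) := by
  refine iSup_le fun i => MeasurableSpace.comap_le_iff_le_map.2 fun s hs => ?_
  have hproj : Measurable[MeasurableSpace.pi (m := mX), mX i] fun x : ∀ i, X i => x i :=
    measurable_pi_apply i
  exact NullMeasurableSet.preimage (univCompletion_le_completionAlg _ s hs)
    (hproj.quasiMeasurePreserving _)

lemma exists_measurableSet_pi_ae_eq {ι : Type*} {X : ι → Type*}
    (mX : ∀ i, MeasurableSpace (X i))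
    (μ : @Measure (∀ i, X i) (MeasurableSpace.pi (m := fun i => univCompletion (mX i))))
    [IsFiniteMeasure μ] {s : Set (∀ i, X i)}
    (hs : MeasurableSet[MeasurableSpace.pi (m := fun i => univCompletion (mX i))] s) :
    ∃ t, MeasurableSet[MeasurableSpace.pi (m := mX)] t ∧ s =ᵐ[μ] t := by
  obtain ⟨t, ht, hst⟩ := pi_univCompletion_le_completionAlg_trim mX μ s hs
  exact ⟨t, ht, ae_eq_of_ae_eq_trim hst⟩

/-- If two probability measures on the product of the universal completions agree on every
set of the (uncompleted) product σ-algebra, they are equal. -/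
theorem measures_eq_of_eq_on_product_algebra
    {m : ℕ} {X : Fin m → Type*} (mX : ∀ j, MeasurableSpace (X j))
    (μ μ' : @Measure (∀ j, X j) (@MeasurableSpace.pi _ _ (fun j => univCompletion (mX j))))
    (hμ : @IsProbabilityMeasure _ (@MeasurableSpace.pi _ _ (fun j => univCompletion (mX j))) μ)
    (hμ' : @IsProbabilityMeasure _ (@MeasurableSpace.pi _ _ (fun j => univCompletion (mX j))) μ')
    (h : ∀ B : Set (∀ j, X j),
      MeasurableSet[@MeasurableSpace.pi _ _ mX] B → μ B = μ' B) :
    μ = μ' := by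
  let := MeasurableSpace.pi (m := fun j => univCompletion (mX j))
  ext s hs
  obtain ⟨t, ht, hst⟩ := exists_measurableSet_pi_ae_eq mX (μ + μ') hs
  calc μ s = μ t := measure_congr (Measure.AbsolutelyContinuous.rfl.add_right μ' |>.ae_le hst)
    _ = μ' t := h t ht
    _ = μ' s := (measure_congr (Measure.AbsolutelyContinuous.rfl.add_right' μ |>.ae_le hst)).symm
end

section
/- Let (X, 𝒳, μ) and (Y, 𝒴, ν) be probability spaces and let λ be a probability measure on (X × Y, 𝒳 ⊗ 𝒴) with λ ≪ μ ⊗ ν. Then there exists a version f of the Radon–Nikodym derivative dλ/d(μ ⊗ ν) taking values in [0, ∞) such that for every x ∈ X, the integral h(x) = ∫_Y f(x,y) dν(y) is finite (i.e., h(x) ∈ [0, ∞)). -/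
open MeasureTheory
open scoped ENNReal

/-- There is a finite-valued version `f` of the Radon–Nikodym derivative `dλ/d(μ ⊗ ν)`
whose fiberwise integral `h(x) = ∫ f(x,·) dν` is finite for *every* `x`. -/
theorem exists_density_version_finite_fiber_integral
    {X Y : Type*} [MeasurableSpace X] [MeasurableSpace Y]
    (μ : Measure X) (ν : Measure Y) (lam : Measure (X × Y))
    [IsProbabilityMeasure μ] [IsProbabilityMeasure ν] [IsProbabilityMeasure lam]
    (hac : lam ≪ μ.prod ν) :
    ∃ f : X × Y → ℝ≥0∞, Measurable f ∧ (∀ z, f z < ⊤) ∧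
      (∀ E : Set (X × Y), MeasurableSet E → lam E = ∫⁻ z in E, f z ∂(μ.prod ν)) ∧
      (∀ x, ∫⁻ y, f (x, y) ∂ν < ⊤) := by
  set g := lam.rnDeriv (μ.prod ν) with hg
  have hgm : Measurable g := Measure.measurable_rnDeriv _ _
  have hset : ∀ E : Set (X × Y), MeasurableSet E →
      lam E = ∫⁻ z in E, g z ∂(μ.prod ν) := by
    intro E hE
    rw [← Measure.setLIntegral_rnDeriv hac E]
  set A : Set X := {x | ∫⁻ y, g (x, y) ∂ν < ⊤} with hA
  have hhm : Measurable fun x => ∫⁻ y, g (x, y) ∂ν :=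
    Measurable.lintegral_prod_right hgm
  have hAm : MeasurableSet A := measurableSet_lt hhm measurable_const
  have hint : ∫⁻ x, ∫⁻ y, g (x, y) ∂ν ∂μ = lam Set.univ := by
    rw [hset Set.univ MeasurableSet.univ, Measure.restrict_univ,
      MeasureTheory.lintegral_prod _ hgm.aemeasurable]
  have hintlt : ∫⁻ x, ∫⁻ y, g (x, y) ∂ν ∂μ < ⊤ := by
    rw [hint]; simp [measure_lt_top]
  have hAc : μ Aᶜ = 0 := by
    have := ae_iff.mp (ae_lt_top hhm hintlt.ne)
    rw [hA, ← Set.compl_setOf] at *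
    exact this
  refine ⟨fun z => if z.1 ∈ A ∧ g z < ⊤ then g z else 0, ?_, ?_, ?_, ?_⟩
  · exact Measurable.ite
      ((hAm.preimage measurable_fst).inter (hgm measurableSet_Iio))
      hgm measurable_const
  · intro z
    by_cases h : z.1 ∈ A ∧ g z < ⊤ <;> simp [h]
  · intro E hE
    rw [hset E hE]
    refine lintegral_congr_ae (ae_restrict_of_ae ?_)
    have h1 : (μ.prod ν) (Aᶜ ×ˢ (Set.univ : Set Y)) = 0 := by
      rw [Measure.prod_prod, hAc, zero_mul]
    have h2 : (μ.prod ν) {z | ¬ g z < ⊤} = 0 := by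
      have := Measure.rnDeriv_lt_top lam (μ.prod ν)
      simpa [ae_iff, hg] using this
    have : (μ.prod ν) {z : X × Y | ¬ (z.1 ∈ A ∧ g z < ⊤)} = 0 := by
      refine measure_mono_null ?_ (by
        rw [← le_zero_iff]
        calc (μ.prod ν) ((Aᶜ ×ˢ (Set.univ : Set Y)) ∪ {z | ¬ g z < ⊤})
            ≤ _ + _ := measure_union_le _ _
          _ = 0 := by rw [h1, h2, add_zero])
      intro z hz
      simp only [Set.mem_setOf_eq, not_and] at hz
      by_cases hzA : z.1 ∈ A
      · exact Or.inr (hz hzA)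
      · exact Or.inl ⟨hzA, Set.mem_univ _⟩
    filter_upwards [measure_eq_zero_iff_ae_notMem.mp this] with z hz
    simp only [Set.mem_setOf_eq, not_not] at hz
    simp [hz]
  · intro x
    by_cases hx : x ∈ A
    · calc ∫⁻ y, (if (x, y).1 ∈ A ∧ g (x, y) < ⊤ then g (x, y) else 0) ∂ν
          ≤ ∫⁻ y, g (x, y) ∂ν := by
            refine lintegral_mono fun y => ?_
            split <;> simp
        _ < ⊤ := hx
    · simp [hx]
end

section
/- Let (X, 𝒳) be a measurable space and Y a metrizable space. Suppose f : X × Y → ℝ is (𝒳 ⊗ ℬ(Y))-measurable. Define D = {(x, r) ∈ X × 𝒫(Y) : ∫_Y f(x,y) dr(y) exists} and g(x,r) = ∫_Y f(x,y) dr(y) on D. Then D ∈ 𝒳 ⊗ ℬ(𝒫(Y)) and g is measurable with respect to the trace of 𝒳 ⊗ ℬ(𝒫(Y)) on D (with values in the extended reals). -/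
/-! On `𝒫(Y)` with the Borel σ-algebra of weak convergence, `r ↦ r F` is measurable for closed
`F`, being a pointwise limit of the continuous maps `r ↦ ∫ φₙ dr` with bounded continuous
`φₙ ↓ 𝟙_F`. Closed sets form a π-system generating `ℬ(Y)`, so `r ↦ (r : Measure Y)` is
measurable for the Giry σ-algebra, i.e. `(x, r) ↦ r` is a Markov kernel on `X × 𝒫(Y)`.
Integrating `f⁺` and `f⁻` against this kernel gives measurable maps into `[0, ∞]`, and `D` and
`g` are built from these two maps by measurable operations. -/

open MeasureTheory
open scoped ENNReal

/-- Borel σ-algebra of the topology of weak convergence on `𝒫(Y)`. -/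
noncomputable instance probabilityMeasureMeasurableSpace
    {Y : Type*} [MeasurableSpace Y] [TopologicalSpace Y] [OpensMeasurableSpace Y] :
    MeasurableSpace (ProbabilityMeasure Y) := borel _

namespace MeasureTheory.ProbabilityMeasure

variable {Y : Type*} [TopologicalSpace Y] [MeasurableSpace Y]

instance borelSpace [OpensMeasurableSpace Y] : BorelSpace (ProbabilityMeasure Y) := ⟨rfl⟩

variable [HasOuterApproxClosed Y]

theorem measurable_apply_of_isClosed [OpensMeasurableSpace Y] {F : Set Y} (hF : IsClosed F) :
    Measurable fun r : ProbabilityMeasure Y => (r : Measure Y) F :=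
  ENNReal.measurable_of_tendsto
    (fun n => (continuous_lintegral_boundedContinuousFunction (hF.apprSeq n)).measurable)
    (tendsto_pi_nhds.mpr fun r => HasOuterApproxClosed.tendsto_lintegral_apprSeq hF r)

theorem measurable_toMeasure [BorelSpace Y] :
    Measurable fun r : ProbabilityMeasure Y => (r : Measure Y) :=
  .measure_of_isPiSystem_of_isProbabilityMeasure
    (BorelSpace.measurable_eq.trans borel_eq_generateFrom_isClosed) isPiSystem_isClosed
    fun _ hF => measurable_apply_of_isClosed hF

end MeasureTheory.ProbabilityMeasure

theorem Measurable.lintegral_prod_right_of_isProbabilityMeasure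
    {α β : Type*} [MeasurableSpace α] [MeasurableSpace β]
    {μ : α → Measure β} [∀ a, IsProbabilityMeasure (μ a)] (hμ : Measurable μ)
    {g : α × β → ℝ≥0∞} (hg : Measurable g) :
    Measurable fun a => ∫⁻ b, g (a, b) ∂μ a :=
  haveI : ProbabilityTheory.IsMarkovKernel ⟨μ, hμ⟩ := ⟨‹_›⟩
  hg.lintegral_kernel_prod_right' (κ := ⟨μ, hμ⟩)

/-- The set `D ⊆ X × 𝒫(Y)` on which `∫ f(x,·) dr` exists is product-measurable, and the
(extended-real valued) integral map `g(x,r) = ∫ f(x,·) dr` is measurable on `D` with the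
trace σ-algebra. -/
theorem integral_in_measure_argument_measurable_on_existence_set
    {X Y : Type*} [MeasurableSpace X]
    [TopologicalSpace Y] [TopologicalSpace.PseudoMetrizableSpace Y]
    [MeasurableSpace Y] [BorelSpace Y]
    (f : X × Y → ℝ) (hf : Measurable f) :
    MeasurableSet {p : X × ProbabilityMeasure Y |
        min (∫⁻ y, ENNReal.ofReal (f (p.1, y)) ∂(p.2 : Measure Y))
            (∫⁻ y, ENNReal.ofReal (-(f (p.1, y))) ∂(p.2 : Measure Y)) < ⊤} ∧
      Measurable (fun p : {p : X × ProbabilityMeasure Y |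
          min (∫⁻ y, ENNReal.ofReal (f (p.1, y)) ∂(p.2 : Measure Y))
              (∫⁻ y, ENNReal.ofReal (-(f (p.1, y))) ∂(p.2 : Measure Y)) < ⊤} =>
        ((∫⁻ y, ENNReal.ofReal (f ((p : X × ProbabilityMeasure Y).1, y))
            ∂((p : X × ProbabilityMeasure Y).2 : Measure Y) : ℝ≥0∞) : EReal)
          - ((∫⁻ y, ENNReal.ofReal (-(f ((p : X × ProbabilityMeasure Y).1, y)))
            ∂((p : X × ProbabilityMeasure Y).2 : Measure Y) : ℝ≥0∞) : EReal)) := by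
  have hμ : Measurable fun p : X × ProbabilityMeasure Y => (p.2 : Measure Y) :=
    ProbabilityMeasure.measurable_toMeasure.comp measurable_snd
  have hf_section : Measurable fun q : (X × ProbabilityMeasure Y) × Y => f (q.1.1, q.2) :=
    hf.comp (measurable_fst.fst.prodMk measurable_snd)
  have h_pos := Measurable.lintegral_prod_right_of_isProbabilityMeasure hμ
    hf_section.ennreal_ofReal
  have h_neg := Measurable.lintegral_prod_right_of_isProbabilityMeasure hμ
    hf_section.neg.ennreal_ofReal
  exact ⟨measurableSet_lt (h_pos.min h_neg) measurable_const,
    ((h_pos.comp measurable_subtype_coe).coe_ereal_ennreal).sub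
      ((h_neg.comp measurable_subtype_coe).coe_ereal_ennreal)⟩
end

section
/- Consider bivariate normal belief maps: for i = 1, 2 and t ∈ ℝ, let f_i(s, t' | t) be the density of the normal distribution on ℝ² with mean (0, t) and covariance matrix [[1, 1], [1, σ_i²]] with σ_i² > 1. Suppose there exist positive densities φ₁, φ₂ on ℝ such that f₁(s, t₂ | t₁) φ₁(t₁) = f₂(s, t₁ | t₂) φ₂(t₂) for all s, t₁, t₂ ∈ ℝ (consistency under a common prior). Then σ₁² = σ₂². -/
/-- Density at `(s, t')` of the bivariate normal distribution with mean `(0, t)` and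
covariance matrix `[[1, 1], [1, σ²]]` (with `σ² > 1`). -/
noncomputable def biNormDens (sigma t s t' : ℝ) : ℝ :=
  (2 * Real.pi * Real.sqrt (sigma ^ 2 - 1))⁻¹ *
    Real.exp (-(sigma ^ 2 * s ^ 2 - 2 * s * (t' - t) + (t' - t) ^ 2) / (2 * (sigma ^ 2 - 1)))

/-- If the two players' bivariate-normal belief maps are consistent under a common prior
(with positive marginal densities `φ₁`, `φ₂`), then necessarily `σ₁² = σ₂²`. -/
theorem consistency_of_normal_beliefs_forces_equal_variances
    (sigma1 sigma2 : ℝ) (h1 : 1 < sigma1 ^ 2) (h2 : 1 < sigma2 ^ 2)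
    (phi1 phi2 : ℝ → ℝ) (hphi1 : ∀ t, 0 < phi1 t) (hphi2 : ∀ t, 0 < phi2 t)
    (hcons : ∀ s t1 t2 : ℝ,
      biNormDens sigma1 t1 s t2 * phi1 t1 = biNormDens sigma2 t2 s t1 * phi2 t2) :
    sigma1 ^ 2 = sigma2 ^ 2 := by
  have h11 := hcons 0 1 1
  have h10 := hcons 0 1 0
  have h01 := hcons 0 0 1
  have h00 := hcons 0 0 0
  simp only [biNormDens] at h11 h10 h01 h00
  norm_num at h11 h10 h01 h00
  set d1 : ℝ := (Real.sqrt (sigma1 ^ 2 - 1))⁻¹ * (Real.pi⁻¹ * (1 / 2)) with hd1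
  set d2 : ℝ := (Real.sqrt (sigma2 ^ 2 - 1))⁻¹ * (Real.pi⁻¹ * (1 / 2)) with hd2
  set e1 : ℝ := Real.exp (-1 / (2 * (sigma1 ^ 2 - 1))) with he1
  set e2 : ℝ := Real.exp (-1 / (2 * (sigma2 ^ 2 - 1))) with he2
  have hd1pos : 0 < d1 := by
    have hs : 0 < Real.sqrt (sigma1 ^ 2 - 1) := Real.sqrt_pos.2 (by linarith)
    have hp := Real.pi_pos
    exact mul_pos (inv_pos.2 hs) (by positivity)
  have hX : 0 < d1 * phi1 1 * (d1 * phi1 0) :=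
    mul_pos (mul_pos hd1pos (hphi1 1)) (mul_pos hd1pos (hphi1 0))
  have hm1 : e1 ^ 2 * (d1 * phi1 1 * (d1 * phi1 0)) = e2 ^ 2 * (d2 * phi2 0 * (d2 * phi2 1)) := by
    linear_combination (d1 * e1 * phi1 0) * h10 + (d2 * e2 * phi2 0) * h01
  have hm2 : d1 * phi1 1 * (d1 * phi1 0) = d2 * phi2 1 * (d2 * phi2 0) := by
    linear_combination (d1 * phi1 0) * h11 + (d2 * phi2 1) * h00
  have hsq : e1 ^ 2 = e2 ^ 2 := by
    have h : e1 ^ 2 * (d1 * phi1 1 * (d1 * phi1 0)) = e2 ^ 2 * (d1 * phi1 1 * (d1 * phi1 0)) := by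
      linear_combination hm1 - e2 ^ 2 * hm2
    exact mul_right_cancel₀ (ne_of_gt hX) h
  have hee : e1 = e2 := by
    have p1 : 0 < e1 := Real.exp_pos _
    have p2 : 0 < e2 := Real.exp_pos _
    nlinarith
  have := Real.exp_injective hee
  have hne1 : sigma1 ^ 2 - 1 ≠ 0 := by linarith
  have hne2 : sigma2 ^ 2 - 1 ≠ 0 := by linarith
  field_simp at this
  linarith
end

section
/- Characterization of Bayesian equilibria (Theorem 1, abstract form): Let Γ be a set (strategy profiles), let I be a finite index set (players), and for each i ∈ I let D_i(γ_i, γ'; t_i) ∈ ℝ denote the gain U_i(γ_i, γ'_{-i}; t_i) − U_i(γ'; t_i) of deviating to γ_i at type t_i. Suppose M is a nonempty family of tuples ν = (ν_i)_{i∈I} of probability measures on the type spaces T_i, closed under the operation ν ↦ ν' where ν'_i = λν_i + (1−λ)δ_{t'_i} (λ ∈ (0,1], t'_i ∈ T_i arbitrary) and ν'_j = ν_j for j ≠ i, and suppose that for every ν ∈ M the integrals ∫ D_i(γ_i, γ'; t_i) dν_i(t_i) are finite. Define γ* to be a Bayesian equilibrium if D_i(γ_i, γ*; t_i) ≤ 0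 for all i, t_i, γ_i, and a ν-Nash equilibrium if ∫ D_i(γ_i, γ*; t_i) dν_i(t_i) ≤ 0 for all i, γ_i. Then γ* is a Bayesian equilibrium if and only if γ* is a ν-Nash equilibrium for every ν ∈ M. -/
/-! If `γ*` is not a Bayesian equilibrium, some player `i` has a deviation with gain
`d > 0` at a single type `t'`. Mixing `νᵢ` with the Dirac mass at `t'` with weight `1 - λ`
turns the integrated gain into `λ c + (1 - λ) d`, where `c` is the integrated gain under `νᵢ`;
for small `λ > 0` this is positive, so `γ*` fails to be a Nash equilibrium for the perturbed
family, which still lies in `M`. -/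

open MeasureTheory Filter Topology

theorem Filter.Eventually.self_of_ae_dirac {α : Type*} [MeasurableSpace α] {a : α}
    {p : α → Prop} (h : ∀ᵐ x ∂Measure.dirac a, p x) : p a := by
  by_contra hpa
  simpa [Measure.dirac_apply_of_mem (s := {x | ¬ p x}) hpa] using ae_iff.1 h

-- Unlike `integral_dirac`, no `MeasurableSingletonClass`: the type spaces are arbitrary.
theorem integral_dirac_of_aestronglyMeasurable {α E : Type*} [MeasurableSpace α]
    [NormedAddCommGroup E] [NormedSpace ℝ E] [CompleteSpace E] {f : α → E} {a : α}
    (hf : AEStronglyMeasurable f (Measure.dirac a)) : ∫ x, f x ∂Measure.dirac a = f a := by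
  rw [integral_congr_ae hf.ae_eq_mk, integral_dirac' _ a hf.stronglyMeasurable_mk]
  exact hf.ae_eq_mk.self_of_ae_dirac.symm

theorem integral_mix_dirac {α : Type*} [MeasurableSpace α] {μ : Measure α} {f : α → ℝ}
    {a : α} {lam : ℝ} (hlam₀ : 0 ≤ lam) (hlam₁ : lam ≤ 1)
    (hf : Integrable f (ENNReal.ofReal lam • μ + ENNReal.ofReal (1 - lam) • Measure.dirac a)) :
    ∫ x, f x ∂(ENNReal.ofReal lam • μ + ENNReal.ofReal (1 - lam) • Measure.dirac a) =
      lam * ∫ x, f x ∂μ + (1 - lam) * f a := by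
  obtain ⟨hμ, hdirac⟩ := integrable_add_measure.1 hf
  rw [integral_add_measure hμ hdirac, integral_smul_measure, integral_smul_measure,
    ENNReal.toReal_ofReal hlam₀, ENNReal.toReal_ofReal (sub_nonneg.2 hlam₁)]
  rcases hlam₁.lt_or_eq with hlt | rfl
  · have hne : ENNReal.ofReal (1 - lam) ≠ 0 := by simpa using hlt
    rw [integral_dirac_of_aestronglyMeasurable
      ((integrable_smul_measure hne ENNReal.ofReal_ne_top).1 hdirac).1]
    simp only [smul_eq_mul]
  · simp

theorem exists_pos_convex_comb_of_pos {c d : ℝ} (hd : 0 < d) :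
    ∃ lam : ℝ, 0 < lam ∧ lam ≤ 1 ∧ 0 < lam * c + (1 - lam) * d := by
  have hcont : Tendsto (fun lam : ℝ => lam * c + (1 - lam) * d) (𝓝[>] 0) (𝓝 d) := by
    refine tendsto_nhdsWithin_of_tendsto_nhds ?_
    have : Continuous (fun lam : ℝ => lam * c + (1 - lam) * d) := by fun_prop
    simpa using this.tendsto 0
  obtain ⟨lam, hpos, hlam⟩ :=
    ((hcont.eventually (lt_mem_nhds hd)).and
      (Ioc_mem_nhdsGT zero_lt_one)).exists
  exact ⟨lam, hlam.1, hlam.2, hpos⟩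

theorem bayesian_equilibrium_iff_nash_for_all_dominating_general
    {I : Type*} [DecidableEq I]
    {T : I → Type*} [∀ i, MeasurableSpace (T i)]
    {Γi : I → Type*}
    (D : ∀ i : I, Γi i → (∀ j, Γi j) → T i → ℝ)
    (M : Set (∀ i, Measure (T i)))
    (hM_ne : M.Nonempty)
    (hM_closed : ∀ ν ∈ M, ∀ (i : I) (lam : ℝ), 0 < lam → lam ≤ 1 → ∀ t' : T i,
      Function.update ν i
        (ENNReal.ofReal lam • ν i + ENNReal.ofReal (1 - lam) • Measure.dirac t') ∈ M)
    (hM_int : ∀ ν ∈ M, ∀ (i : I) (γi : Γi i) (γ' : ∀ j, Γi j),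
      Integrable (fun t => D i γi γ' t) (ν i))
    (γstar : ∀ j, Γi j) :
    (∀ (i : I) (t : T i) (γi : Γi i), D i γi γstar t ≤ 0) ↔
      (∀ ν ∈ M, ∀ (i : I) (γi : Γi i), ∫ t, D i γi γstar t ∂(ν i) ≤ 0) := by
  refine ⟨fun hBE ν _ i γi => integral_nonpos fun t => hBE i t γi, fun hNE i t' γi => ?_⟩
  by_contra! hgain
  obtain ⟨ν, hν⟩ := hM_ne
  obtain ⟨lam, hlam₀, hlam₁, hmix_pos⟩ :=
    exists_pos_convex_comb_of_pos (c := ∫ t, D i γi γstar t ∂(ν i)) hgain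
  have hmem := hM_closed ν hν i lam hlam₀ hlam₁ t'
  have hmix_nonpos := hNE _ hmem i γi
  have hint := hM_int _ hmem i γi γstar
  rw [Function.update_self] at hmix_nonpos hint
  rw [integral_mix_dirac hlam₀.le hlam₁ hint] at hmix_nonpos
  linarith

/-- Abstract characterization of Bayesian equilibria: with `D i γᵢ γ' tᵢ` the deviation gain
of player `i` at type `tᵢ`, and `M` a nonempty family of tuples of probability measures,
closed under mixing any coordinate with a Dirac measure, on which all deviation gains are
integrable, a profile `γ*` is a Bayesian equilibrium (pointwise no profitable deviation)
iff it is a Nash equilibrium of the surrogate game `G*(ν)` for every `ν ∈ M`. -/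
theorem bayesian_equilibrium_iff_nash_for_all_dominating
    {I : Type*} [Fintype I] [DecidableEq I]
    {T : I → Type*} [∀ i, MeasurableSpace (T i)]
    {Γi : I → Type*}
    (D : ∀ i : I, Γi i → (∀ j, Γi j) → T i → ℝ)
    (M : Set (∀ i, Measure (T i)))
    (hM_ne : M.Nonempty)
    (hM_prob : ∀ ν ∈ M, ∀ i, IsProbabilityMeasure (ν i))
    (hM_closed : ∀ ν ∈ M, ∀ (i : I) (lam : ℝ), 0 < lam → lam ≤ 1 → ∀ t' : T i,
      Function.update ν i
        (ENNReal.ofReal lam • ν i + ENNReal.ofReal (1 - lam) • Measure.dirac t') ∈ M)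
    (hM_int : ∀ ν ∈ M, ∀ (i : I) (γi : Γi i) (γ' : ∀ j, Γi j),
      Integrable (fun t => D i γi γ' t) (ν i))
    (γstar : ∀ j, Γi j) :
    (∀ (i : I) (t : T i) (γi : Γi i), D i γi γstar t ≤ 0) ↔
      (∀ ν ∈ M, ∀ (i : I) (γi : Γi i), ∫ t, D i γi γstar t ∂(ν i) ≤ 0) :=
  bayesian_equilibrium_iff_nash_for_all_dominating_general D M hM_ne hM_closed hM_int γstar
end
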